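/- Let G be a finite directed graph with nonnegative arc capacities and distinguished nodes s, t, and let e be an arc. Then the vitality of e, defined as minCut(G) − minCut(G − e), equals max{0, minCut(G) − (minCut_e(G) − c(e))}, where minCut_e(G) is the minimum capacity among all s-t cuts of G crossed by e. -/

import Mathlib

/-!
Deleting `e` lowers the capacity of every cut crossed by `e` by `c e` and leaves every other cut
unchanged, so `minCut (G - e) = min (minCut G) (minCut_e G - c e)`. The identity
`a - min a b = max 0 (a - b)` then gives the vitality.
-/

open Finset

/-- Capacity of the s-t cut determined by `S` (arcs from `S` to its complement). -/
def cutCap {V : Type*} [Fintype V] [DecidableEq V] (c : V → V → ℝ) (S : Finset V) : ℝ :=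
  ∑ x ∈ S, ∑ y ∈ Sᶜ, c x y

/-- Minimum capacity of an s-t cut. -/
noncomputable def minCut {V : Type*} [Fintype V] [DecidableEq V] (c : V → V → ℝ)
    (s t : V) : ℝ :=
  sInf {r | ∃ S : Finset V, s ∈ S ∧ t ∉ S ∧ r = cutCap c S}

/-- The graph with arc `e` deleted (its capacity set to `0`). -/
def delArc {V : Type*} [DecidableEq V] (c : V → V → ℝ) (e : V × V) : V → V → ℝ :=
  fun x y => if (x, y) = e then 0 else c x y

/-- Minimum capacity among s-t cuts crossed by the arc `e`. -/
noncomputable def minCutCross {V : Type*} [Fintype V] [DecidableEq V] (c : V → V → ℝ)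
    (s t : V) (e : V × V) : ℝ :=
  sInf {r | ∃ S : Finset V, s ∈ S ∧ t ∉ S ∧ e.1 ∈ S ∧ e.2 ∉ S ∧ r = cutCap c S}

section Cuts

variable {V : Type*} [Fintype V] [DecidableEq V] (c : V → V → ℝ) {s t : V}

lemma cutCap_delArc (e : V × V) (S : Finset V) :
    cutCap (delArc c e) S = cutCap c S - if e.1 ∈ S ∧ e.2 ∉ S then c e.1 e.2 else 0 := by
  have hcross : (e.1 ∈ S ∧ e.2 ∉ S) ↔ e ∈ S ×ˢ Sᶜ := by rw [mem_product, mem_compl]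
  unfold cutCap
  rw [if_congr hcross rfl rfl, ← sum_ite_eq' (S ×ˢ Sᶜ) e (fun p => c p.1 p.2),
    ← sum_product', ← sum_product', ← sum_sub_distrib]
  refine sum_congr rfl fun p _ => ?_
  by_cases hp : p = e <;> simp [delArc, hp]

lemma finite_cutCaps (s t : V) : {r | ∃ S, s ∈ S ∧ t ∉ S ∧ r = cutCap c S}.Finite :=
  (Set.finite_range (cutCap c)).subset (by rintro _ ⟨S, -, -, rfl⟩; exact ⟨S, rfl⟩)

lemma finite_crossingCutCaps (s t : V) (e : V × V) :
    {r | ∃ S, s ∈ S ∧ t ∉ S ∧ e.1 ∈ S ∧ e.2 ∉ S ∧ r = cutCap c S}.Finite :=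
  (Set.finite_range (cutCap c)).subset (by rintro _ ⟨S, -, -, -, -, rfl⟩; exact ⟨S, rfl⟩)

lemma minCut_le_cutCap {S : Finset V} (hs : s ∈ S) (ht : t ∉ S) :
    minCut c s t ≤ cutCap c S :=
  csInf_le (finite_cutCaps c s t).bddBelow ⟨S, hs, ht, rfl⟩

lemma exists_cutCap_eq_minCut {S₀ : Finset V} (hs : s ∈ S₀) (ht : t ∉ S₀) :
    ∃ S, s ∈ S ∧ t ∉ S ∧ cutCap c S = minCut c s t := by
  obtain ⟨S, hs, ht, hS⟩ :=
    Set.Nonempty.csInf_mem (by exact ⟨_, S₀, hs, ht, rfl⟩) (finite_cutCaps c s t)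
  exact ⟨S, hs, ht, hS.symm⟩

lemma minCutCross_le_cutCap {e : V × V} {S : Finset V} (hs : s ∈ S) (ht : t ∉ S)
    (he₁ : e.1 ∈ S) (he₂ : e.2 ∉ S) : minCutCross c s t e ≤ cutCap c S :=
  csInf_le (finite_crossingCutCaps c s t e).bddBelow ⟨S, hs, ht, he₁, he₂, rfl⟩

lemma exists_cutCap_eq_minCutCross {e : V × V} {S₀ : Finset V} (hs : s ∈ S₀) (ht : t ∉ S₀)
    (he₁ : e.1 ∈ S₀) (he₂ : e.2 ∉ S₀) :
    ∃ S, s ∈ S ∧ t ∉ S ∧ e.1 ∈ S ∧ e.2 ∉ S ∧ cutCap c S = minCutCross c s t e := by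
  obtain ⟨S, hs, ht, he₁, he₂, hS⟩ :=
    Set.Nonempty.csInf_mem (by exact ⟨_, S₀, hs, ht, he₁, he₂, rfl⟩)
      (finite_crossingCutCaps c s t e)
  exact ⟨S, hs, ht, he₁, he₂, hS.symm⟩

lemma minCut_delArc {e : V × V} (hce : 0 ≤ c e.1 e.2)
    (hcross : ∃ S : Finset V, s ∈ S ∧ t ∉ S ∧ e.1 ∈ S ∧ e.2 ∉ S) :
    minCut (delArc c e) s t = min (minCut c s t) (minCutCross c s t e - c e.1 e.2) := by
  obtain ⟨S₀, hs₀, ht₀, he₁₀, he₂₀⟩ := hcross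
  apply le_antisymm
  · apply le_min
    · obtain ⟨S, hs, ht, hS⟩ := exists_cutCap_eq_minCut c hs₀ ht₀
      calc minCut (delArc c e) s t ≤ cutCap (delArc c e) S := minCut_le_cutCap _ hs ht
        _ ≤ cutCap c S := by rw [cutCap_delArc]; split_ifs <;> linarith
        _ = minCut c s t := hS
    · obtain ⟨S, hs, ht, he₁, he₂, hS⟩ := exists_cutCap_eq_minCutCross c hs₀ ht₀ he₁₀ he₂₀
      calc minCut (delArc c e) s t ≤ cutCap (delArc c e) S := minCut_le_cutCap _ hs ht
        _ = minCutCross c s t e - c e.1 e.2 := by rw [cutCap_delArc, if_pos ⟨he₁, he₂⟩, hS]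
  · obtain ⟨S, hs, ht, hS⟩ := exists_cutCap_eq_minCut (delArc c e) hs₀ ht₀
    rw [← hS, cutCap_delArc]
    split_ifs with he
    · exact (min_le_right _ _).trans (by linarith [minCutCross_le_cutCap c hs ht he.1 he.2])
    · exact (min_le_left _ _).trans (by linarith [minCut_le_cutCap c hs ht])

end Cuts

theorem flowVit_eq_max_general {V : Type*} [Fintype V] [DecidableEq V]
    (c : V → V → ℝ) (hc : ∀ x y, 0 ≤ c x y) (s t : V) (e : V × V)
    (hcross : ∃ S : Finset V, s ∈ S ∧ t ∉ S ∧ e.1 ∈ S ∧ e.2 ∉ S) :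
    minCut c s t - minCut (delArc c e) s t =
      max 0 (minCut c s t - (minCutCross c s t e - c e.1 e.2)) := by
  rw [minCut_delArc c (hc e.1 e.2) hcross, ← max_sub_sub_left, sub_self]

theorem flowVit_eq_max {V : Type*} [Fintype V] [DecidableEq V]
    (c : V → V → ℝ) (hc : ∀ x y, 0 ≤ c x y) (s t : V) (hst : s ≠ t) (e : V × V)
    (hcross : ∃ S : Finset V, s ∈ S ∧ t ∉ S ∧ e.1 ∈ S ∧ e.2 ∉ S) :
    minCut c s t - minCut (delArc c e) s t =
      max 0 (minCut c s t - (minCutCross c s t e - c e.1 e.2)) :=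
  flowVit_eq_max_general c hc s t e hcross
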